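/- Let v: ℝ → ℝ be smooth, x ∈ ℝ a point with v(x) > 0 and v′(x) ≠ 0, and set w = log ∘ v. Writing vⱼ = v^{(j)}(x) and wⱼ = w^{(j)}(x), the identity 𝔉₂ = −2·ℋ₂ holds, where 𝔉₂ = v·v₄/(576 v₁²) − 7v·v₃·v₂/(960 v₁³) + 37 v₃/(2880 v₁) + v·v₂³/(180 v₁⁴) − 11 v₂²/(960 v₁²) + v₂/(120 v) − v₁²/(120 v²) (with v = v(x)), and ℋ₂ = −w₄/(1152 w₁²) + 7 w₃w₂/(1920 w₁³) − w₃/(160 w₁) − w₂³/(360 w₁⁴) + 11 w₂²/(1920 w₁²) − 7 w₂/640 − w₁²/1440. -/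

import Mathlib

section aux

variable (v : ℝ → ℝ)

/-- First logarithmic derivative. -/
noncomputable def G1 : ℝ → ℝ := fun y => iteratedDeriv 1 v y / v y

/-- Second logarithmic derivative. -/
noncomputable def G2 : ℝ → ℝ := fun y =>
  iteratedDeriv 2 v y / v y - (iteratedDeriv 1 v y / v y) ^ 2

/-- Third logarithmic derivative. -/
noncomputable def G3 : ℝ → ℝ := fun y =>
  iteratedDeriv 3 v y / v y - 3 * iteratedDeriv 2 v y * iteratedDeriv 1 v y / v y ^ 2
    + 2 * (iteratedDeriv 1 v y / v y) ^ 3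

/-- Fourth logarithmic derivative. -/
noncomputable def G4 : ℝ → ℝ := fun y =>
  iteratedDeriv 4 v y / v y
    - (4 * iteratedDeriv 3 v y * iteratedDeriv 1 v y + 3 * (iteratedDeriv 2 v y) ^ 2) / v y ^ 2
    + 12 * iteratedDeriv 2 v y * (iteratedDeriv 1 v y) ^ 2 / v y ^ 3
    - 6 * (iteratedDeriv 1 v y) ^ 4 / v y ^ 4

variable {v}

lemma hasDerivAt_iteratedDeriv (hv : ContDiff ℝ (⊤ : ℕ∞) v) (j : ℕ) (y : ℝ) :
    HasDerivAt (iteratedDeriv j v) (iteratedDeriv (j + 1) v y) y := by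
  have h := ((hv.differentiable_iteratedDeriv j (by exact_mod_cast ENat.coe_lt_top j)) y).hasDerivAt
  rwa [show iteratedDeriv (j + 1) v y = deriv (iteratedDeriv j v) y by
    rw [iteratedDeriv_succ]]

lemma hasDerivAt_v (hv : ContDiff ℝ (⊤ : ℕ∞) v) (y : ℝ) :
    HasDerivAt v (iteratedDeriv 1 v y) y := by
  have h := hasDerivAt_iteratedDeriv hv 0 y
  rwa [iteratedDeriv_zero] at h

lemma hasDerivAt_G1 (hv : ContDiff ℝ (⊤ : ℕ∞) v) {y : ℝ} (hy : v y ≠ 0) :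
    HasDerivAt (G1 v) (G2 v y) y := by
  have h := (hasDerivAt_iteratedDeriv hv 1 y).div (hasDerivAt_v hv y) hy
  have he : (iteratedDeriv 2 v y * v y - iteratedDeriv 1 v y * iteratedDeriv 1 v y) / v y ^ 2
      = G2 v y := by
    unfold G2; field_simp
  exact he ▸ h

lemma hasDerivAt_G2 (hv : ContDiff ℝ (⊤ : ℕ∞) v) {y : ℝ} (hy : v y ≠ 0) :
    HasDerivAt (G2 v) (G3 v y) y := by
  have h1 := (hasDerivAt_iteratedDeriv hv 2 y).div (hasDerivAt_v hv y) hy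
  have h2 := ((hasDerivAt_iteratedDeriv hv 1 y).div (hasDerivAt_v hv y) hy).pow 2
  have h := h1.sub h2
  have he : (iteratedDeriv 3 v y * v y - iteratedDeriv 2 v y * iteratedDeriv 1 v y) / v y ^ 2
      - (2 : ℕ) * (iteratedDeriv 1 v y / v y) ^ (2 - 1)
        * ((iteratedDeriv 2 v y * v y - iteratedDeriv 1 v y * iteratedDeriv 1 v y) / v y ^ 2)
      = G3 v y := by
    unfold G3; push_cast; field_simp; ring
  exact he ▸ h

lemma hasDerivAt_G3 (hv : ContDiff ℝ (⊤ : ℕ∞) v) {y : ℝ} (hy : v y ≠ 0) :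
    HasDerivAt (G3 v) (G4 v y) y := by
  have h1 := (hasDerivAt_iteratedDeriv hv 3 y).div (hasDerivAt_v hv y) hy
  have h2 := (((hasDerivAt_iteratedDeriv hv 2 y).const_mul 3).mul
      (hasDerivAt_iteratedDeriv hv 1 y)).div ((hasDerivAt_v hv y).pow 2) (pow_ne_zero 2 hy)
  have h3 := (((hasDerivAt_iteratedDeriv hv 1 y).div (hasDerivAt_v hv y) hy).pow 3).const_mul 2
  have h := (h1.sub h2).add h3
  have he : (iteratedDeriv 4 v y * v y - iteratedDeriv 3 v y * iteratedDeriv 1 v y) / v y ^ 2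
      - ((3 * iteratedDeriv 3 v y * iteratedDeriv 1 v y
            + 3 * iteratedDeriv 2 v y * iteratedDeriv 2 v y) * v y ^ 2
          - 3 * iteratedDeriv 2 v y * iteratedDeriv 1 v y
            * ((2 : ℕ) * v y ^ (2 - 1) * iteratedDeriv 1 v y)) / (v y ^ 2) ^ 2
      + 2 * ((3 : ℕ) * (iteratedDeriv 1 v y / v y) ^ (3 - 1)
          * ((iteratedDeriv 2 v y * v y - iteratedDeriv 1 v y * iteratedDeriv 1 v y) / v y ^ 2))
      = G4 v y := by
    unfold G4; push_cast; field_simp; ring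
  exact he ▸ h

end aux

/-- Genus-two identity `F₂ = −2 H₂` relating the genus-two free energy of the
one-dimensional generalized Frobenius manifold with potential `F = v⁴/12` and the
genus-two term of the solution of the loop equation of the `(−1/2,1,1)`-type fractional
Volterra hierarchy, under the change of variable `w = log v`. -/
theorem genus_two_identity (v w : ℝ → ℝ) (hv : ContDiff ℝ (⊤ : ℕ∞) v) (x : ℝ)
    (h1 : 0 < v x) (h2 : deriv v x ≠ 0) (hw : w = Real.log ∘ v)
    (V W : ℕ → ℝ)
    (hV : ∀ j, V j = iteratedDeriv j v x)
    (hW : ∀ j, W j = iteratedDeriv j w x) :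
    v x * V 4 / (576 * (V 1) ^ 2)
      - 7 * v x * V 3 * V 2 / (960 * (V 1) ^ 3)
      + 37 * V 3 / (2880 * V 1)
      + v x * (V 2) ^ 3 / (180 * (V 1) ^ 4)
      - 11 * (V 2) ^ 2 / (960 * (V 1) ^ 2)
      + V 2 / (120 * v x)
      - (V 1) ^ 2 / (120 * (v x) ^ 2)
    = -2 * (-(W 4) / (1152 * (W 1) ^ 2)
      + 7 * W 3 * W 2 / (1920 * (W 1) ^ 3)
      - W 3 / (160 * W 1)
      - (W 2) ^ 3 / (360 * (W 1) ^ 4)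
      + 11 * (W 2) ^ 2 / (1920 * (W 1) ^ 2)
      - 7 * W 2 / 640
      - (W 1) ^ 2 / 1440) := by
  set s : Set ℝ := v ⁻¹' {0}ᶜ with hs
  have hs_open : IsOpen s := isOpen_compl_singleton.preimage hv.continuous
  have hxs : x ∈ s := by simp [hs, ne_of_gt h1]
  have hmem : ∀ y ∈ s, v y ≠ 0 := fun y hy => hy
  -- deriv w = G1 on s
  have ev1 : ∀ y ∈ s, deriv w y = G1 v y := by
    intro y hy
    have hlog : HasDerivAt Real.log (v y)⁻¹ (v y) := Real.hasDerivAt_log (hmem y hy)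
    have hcomp : HasDerivAt w ((v y)⁻¹ * iteratedDeriv 1 v y) y := by
      rw [hw]; exact (hlog.comp y (hasDerivAt_v hv y))
    rw [hcomp.deriv]
    unfold G1
    field_simp
  -- iteratedDeriv 2 w = G2 on s
  have ev2 : ∀ y ∈ s, iteratedDeriv 2 w y = G2 v y := by
    intro y hy
    have h : deriv w =ᶠ[nhds y] G1 v :=
      Filter.eventuallyEq_of_mem (hs_open.mem_nhds hy) (fun z hz => ev1 z hz)
    rw [show (2 : ℕ) = 1 + 1 from rfl, iteratedDeriv_succ, iteratedDeriv_one,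
      h.deriv_eq, (hasDerivAt_G1 hv (hmem y hy)).deriv]
  -- iteratedDeriv 3 w = G3 on s
  have ev3 : ∀ y ∈ s, iteratedDeriv 3 w y = G3 v y := by
    intro y hy
    have h : iteratedDeriv 2 w =ᶠ[nhds y] G2 v :=
      Filter.eventuallyEq_of_mem (hs_open.mem_nhds hy) (fun z hz => ev2 z hz)
    rw [show (3 : ℕ) = 2 + 1 from rfl, iteratedDeriv_succ,
      h.deriv_eq, (hasDerivAt_G2 hv (hmem y hy)).deriv]
  -- iteratedDeriv 4 w x = G4 v x
  have ev4 : iteratedDeriv 4 w x = G4 v x := by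
    have h : iteratedDeriv 3 w =ᶠ[nhds x] G3 v :=
      Filter.eventuallyEq_of_mem (hs_open.mem_nhds hxs) (fun z hz => ev3 z hz)
    rw [show (4 : ℕ) = 3 + 1 from rfl, iteratedDeriv_succ,
      h.deriv_eq, (hasDerivAt_G3 hv (hmem x hxs)).deriv]
  have hvx : v x ≠ 0 := ne_of_gt h1
  have hV1 : iteratedDeriv 1 v x ≠ 0 := by rwa [iteratedDeriv_one]
  have hW1 : W 1 = iteratedDeriv 1 v x / v x := by
    rw [hW 1, iteratedDeriv_one, ev1 x hxs]; rfl
  have hW2 : W 2 = G2 v x := by rw [hW 2, ev2 x hxs]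
  have hW3 : W 3 = G3 v x := by rw [hW 3, ev3 x hxs]
  have hW4 : W 4 = G4 v x := by rw [hW 4, ev4]
  rw [hW1, hW2, hW3, hW4, hV 1, hV 2, hV 3, hV 4]
  unfold G2 G3 G4
  have hW1ne : iteratedDeriv 1 v x / v x ≠ 0 := div_ne_zero hV1 hvx
  field_simp
  ring
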